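/- For every integer d ≥ 0: (1) T_x e_i = (-1)^i e_{d-i} for 0 ≤ i ≤ d, and (2) P³ = T_x² = (-1)^d I, where I is the (d+1)×(d+1) identity matrix. -/

import Mathlib

/-!
`exp(Y*)` is the Pascal matrix `L = (C(j, i))`, and `Z*` is `-Y*` read backwards, so `exp(Z*)` is
`E = (-1)^(i+j) C(d-j, d-i)`, the inverse of `L` read backwards. Since `X* = exp(ad Y*) Z*`,
i.e. `X* L = L Z*`, we get `P = L E`. Comparing coefficients in binomial expansions evaluates
`P` and then `T_x = L E L`, which is the signed antidiagonal matrix; in particular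
`T_x² = (-1)^d I`. Finally `T_x E = L T_x`, so `(L E)³ = L E (L E L) E = L E L T_x = T_x²`.
-/

open Matrix

noncomputable section

/-- The matrix X* acting on the standard basis of V(d) by
X* eᵢ = (i-d-1)e_{i-1} + (d-2i)eᵢ + (i+1)e_{i+1}. -/
def Xs (d : ℕ) : Matrix (Fin (d + 1)) (Fin (d + 1)) ℚ :=
  Matrix.of fun j i =>
    if (j : ℕ) + 1 = (i : ℕ) then (i : ℚ) - d - 1
    else if (j : ℕ) = (i : ℕ) then (d : ℚ) - 2 * (i : ℕ)
    else if (j : ℕ) = (i : ℕ) + 1 then (i : ℚ) + 1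
    else 0

/-- The matrix Y* acting by Y* eᵢ = (i+1)e_{i+1}. -/
def Ys (d : ℕ) : Matrix (Fin (d + 1)) (Fin (d + 1)) ℚ :=
  Matrix.of fun j i => if (j : ℕ) = (i : ℕ) + 1 then (i : ℚ) + 1 else 0

/-- The matrix Z* acting by Z* eᵢ = (i-d-1)e_{i-1}. -/
def Zs (d : ℕ) : Matrix (Fin (d + 1)) (Fin (d + 1)) ℚ :=
  Matrix.of fun j i => if (j : ℕ) + 1 = (i : ℕ) then (i : ℚ) - d - 1 else 0

/-- The exponential of a nilpotent (d+1)×(d+1) matrix, as the finite sum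
∑_{k≤d} Aᵏ/k!. -/
def expM {d : ℕ} (A : Matrix (Fin (d + 1)) (Fin (d + 1)) ℚ) :
    Matrix (Fin (d + 1)) (Fin (d + 1)) ℚ :=
  ∑ k ∈ Finset.range (d + 1), ((Nat.factorial k : ℚ)⁻¹) • A ^ k

/-- P = exp(X*)·exp(Y*). -/
def P (d : ℕ) : Matrix (Fin (d + 1)) (Fin (d + 1)) ℚ := expM (Xs d) * expM (Ys d)

/-- T_x = exp(Y*)·exp(Z*)·exp(Y*). -/
def Tx (d : ℕ) : Matrix (Fin (d + 1)) (Fin (d + 1)) ℚ :=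
  expM (Ys d) * expM (Zs d) * expM (Ys d)

namespace DualEquitable

open Finset

open Polynomial in
theorem sum_neg_one_pow_mul_choose_mul_choose_sub (j n m : ℕ) (hjn : j ≤ n) :
    ∑ k ∈ range (j + 1), (-1 : ℚ) ^ k * j.choose k * (n - k).choose m =
      if j ≤ m then ((n - j).choose (m - j) : ℚ) else 0 := by
  have hpoly :
      ∑ k ∈ range (j + 1), ((-1 : ℚ) ^ k * j.choose k) • (X + 1 : ℚ[X]) ^ (n - k) =
        X ^ j * (X + 1) ^ (n - j) := by
    have hX := add_pow (-1 : ℚ[X]) (X + 1) j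
    rw [neg_add_cancel_comm_assoc] at hX
    rw [hX, sum_mul]
    refine sum_congr rfl fun k hk => ?_
    rw [show n - k = (j - k) + (n - j) by grind, pow_add, smul_eq_C_mul]
    simp only [C_mul, C_pow, C_neg, C_1, map_natCast]
    ring
  simpa [finsetSum_coeff, coeff_X_pow_mul', coeff_X_add_one_pow] using congrArg (coeff · m) hpoly

open Polynomial in
theorem sum_neg_one_pow_mul_choose_mul_choose (n i : ℕ) :
    ∑ k ∈ range (n + 1), (-1 : ℚ) ^ k * n.choose k * k.choose i =
      if i = n then (-1 : ℚ) ^ n else 0 := by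
  have hpoly : ∑ k ∈ range (n + 1), ((-1 : ℚ) ^ k * n.choose k) • (X + 1 : ℚ[X]) ^ k =
      C ((-1) ^ n) * X ^ n := by
    have hX := sub_pow (X + 1 : ℚ[X]) 1 n
    rw [add_sub_cancel_right] at hX
    have hsq : (-1 : ℚ[X]) ^ n * (-1) ^ n = 1 := by rw [← mul_pow]; simp
    rw [hX, mul_sum]
    refine sum_congr rfl fun k _ => ?_
    rw [smul_eq_C_mul, pow_add]
    simp only [C_mul, C_pow, C_neg, C_1, map_natCast, one_pow]
    linear_combination -(-1 : ℚ[X]) ^ k * (X + 1) ^ k * (n.choose k : ℚ[X]) * hsq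
  have := congrArg (coeff · i) hpoly
  simpa only [finsetSum_coeff, coeff_smul, coeff_X_add_one_pow, coeff_C_mul_X_pow,
    smul_eq_mul] using this

theorem choose_intertwining_identity (d j i : ℕ) :
    ((j : ℚ) - d) * (j + 1).choose (i + 1) + j * (j - 1).choose (i + 1)
      + (d - 2 * j) * j.choose (i + 1) = ((i : ℚ) - d) * j.choose i := by
  rcases j with _ | s
  · rcases i with _ | _ | k <;> simp [Nat.choose_eq_zero_of_lt]
  rcases i with _ | k
  · simp only [Nat.cast_add, Nat.cast_one, zero_add, Nat.choose_one_right, add_tsub_cancel_right,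
      CharP.cast_eq_zero, zero_sub, Nat.choose_zero_right, mul_one]
    ring
  have habsorb : ((s + 1) * s.choose k : ℚ) = (s + 1).choose (k + 1) * (k + 1) := by
    exact_mod_cast Nat.add_one_mul_choose_eq s k
  have hpascal : ((s + 1).choose (k + 1) : ℚ) = s.choose k + s.choose (k + 1) := by
    exact_mod_cast Nat.choose_succ_succ' s k
  rw [Nat.add_sub_cancel, Nat.choose_succ_succ' (s + 1), Nat.choose_succ_succ' s (k + 1)]
  push_cast
  linear_combination habsorb + ((s : ℚ) + 1) * hpascal

theorem sum_fin_eq_sum_range_of_le {d n : ℕ} (hn : n ≤ d) (g : ℕ → ℚ)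
    (hg : ∀ k, n < k → g k = 0) : ∑ k : Fin (d + 1), g k = ∑ k ∈ range (n + 1), g k := by
  rw [Fin.sum_univ_eq_sum_range g]
  exact (sum_subset (range_subset_range.2 (by omega)) fun k _ hk => hg k (by simpa using hk)).symm

theorem sum_fin_ite_eq {d : ℕ} (n : ℕ) (f : ℕ → ℚ) :
    ∑ t : Fin (d + 1), (if n = (t : ℕ) then f t else 0) = if n ≤ d then f n else 0 := by
  rw [Fin.sum_univ_eq_sum_range (fun t => if n = t then f t else 0), sum_ite_eq]
  simp only [mem_range, Nat.lt_succ_iff]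

theorem sum_fin_ite_add_one_eq {d : ℕ} (n : ℕ) (f : ℕ → ℚ) :
    ∑ t : Fin (d + 1), (if (t : ℕ) + 1 = n then f t else 0) =
      if n ≠ 0 ∧ n ≤ d + 1 then f (n - 1) else 0 := by
  rw [Fin.sum_univ_eq_sum_range (fun t => if t + 1 = n then f t else 0)]
  rcases n with _ | n
  · simp
  · simp [sum_ite_eq']

theorem mul_pow_three_eq_sq_of_semiconjBy {M : Type*} [Monoid M] {a b t : M}
    (ht : a * b * a = t) (h : SemiconjBy t b a) : (a * b) ^ 3 = t ^ 2 := by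
  calc (a * b) ^ 3 = a * b * (a * b * a) * b := by
        simp only [pow_succ, pow_zero, one_mul, mul_assoc]
    _ = a * b * (t * b) := by rw [ht, mul_assoc]
    _ = a * b * a * t := by rw [h.eq, ← mul_assoc]
    _ = t ^ 2 := by rw [ht, sq]

theorem map_expM {d : ℕ} {F : Type*} [FunLike F (Matrix (Fin (d + 1)) (Fin (d + 1)) ℚ)
    (Matrix (Fin (d + 1)) (Fin (d + 1)) ℚ)] [AlgHomClass F ℚ _ _] (f : F)
    (A : Matrix (Fin (d + 1)) (Fin (d + 1)) ℚ) : f (expM A) = expM (f A) := by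
  simp [expM, map_sum, map_smul, map_pow]

theorem expM_mul_eq_mul_expM {d : ℕ} {A B L : Matrix (Fin (d + 1)) (Fin (d + 1)) ℚ}
    (h : A * L = L * B) : expM A * L = L * expM B := by
  have hpow (k : ℕ) : A ^ k * L = L * B ^ k := (SemiconjBy.pow_right h.symm k).symm
  simp only [expM, sum_mul, mul_sum, Matrix.smul_mul, Matrix.mul_smul, hpow]

variable (d : ℕ)

def pascal : Matrix (Fin (d + 1)) (Fin (d + 1)) ℚ :=
  of fun j i => ((j : ℕ).choose i : ℚ)

def revInvPascal : Matrix (Fin (d + 1)) (Fin (d + 1)) ℚ :=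
  of fun j i => (-1) ^ ((i : ℕ) + j) * ((d - j).choose (d - i) : ℚ)

def revAltPascal : Matrix (Fin (d + 1)) (Fin (d + 1)) ℚ :=
  of fun j i => (-1) ^ (i : ℕ) * ((d - j).choose i : ℚ)

def signedAntidiag : Matrix (Fin (d + 1)) (Fin (d + 1)) ℚ :=
  of fun j i => if j = i.rev then (-1) ^ (i : ℕ) else 0

theorem Ys_pow_apply (k : ℕ) (j i : Fin (d + 1)) :
    (Ys d ^ k) j i =
      if (j : ℕ) = i + k then ((j : ℕ).factorial / (i : ℕ).factorial : ℚ) else 0 := by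
  induction k generalizing i with
  | zero =>
    rcases eq_or_ne j i with rfl | h
    · simp [Nat.factorial_ne_zero]
    · simp [one_apply, h, Fin.val_ne_of_ne h]
  | succ k ih =>
    rw [pow_succ, mul_apply]
    simp only [ih]
    simp only [Ys, of_apply, mul_ite, mul_zero]
    rw [Fin.sum_univ_eq_sum_range (fun t => if t = i + 1 then
      (if (j : ℕ) = t + k then ((j : ℕ).factorial / t.factorial : ℚ) else 0) * ((i : ℕ) + 1)
        else 0), sum_ite_eq']
    simp only [mem_range]
    split_ifs <;> try omega
    · rw [Nat.factorial_succ]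
      push_cast
      field_simp
    all_goals simp

theorem expM_smul_Ys (c : ℚ) :
    expM (c • Ys d) =
      of fun j i : Fin (d + 1) => c ^ ((j : ℕ) - i) * ((j : ℕ).choose i : ℚ) := by
  ext j i
  simp only [expM, Matrix.sum_apply, Matrix.smul_apply, _root_.smul_pow, Ys_pow_apply,
    smul_eq_mul, mul_ite, mul_zero, of_apply]
  by_cases h : (i : ℕ) ≤ j
  · rw [sum_eq_single_of_mem ((j : ℕ) - i) (mem_range.2 (by omega))
        fun k _ hk => if_neg (by omega), if_pos (by omega), Nat.cast_choose ℚ h]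
    field_simp
  · rw [sum_eq_zero fun k _ => if_neg (by omega), Nat.choose_eq_zero_of_lt (by omega)]
    simp

theorem expM_Ys : expM (Ys d) = pascal d := by
  rw [← one_smul ℚ (Ys d), expM_smul_Ys]
  ext j i
  simp [pascal]

theorem Zs_eq_reindex_neg_Ys :
    Zs d = reindexAlgEquiv ℚ ℚ Fin.revPerm ((-1 : ℚ) • Ys d) := by
  ext j i
  simp only [Zs, Ys, coe_reindexAlgEquiv, reindex_apply, Fin.revPerm_symm, submatrix_apply,
    Fin.revPerm_apply, Matrix.smul_apply, of_apply, Fin.val_rev]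
  split_ifs <;> try omega
  · push_cast [Nat.cast_sub i.is_le]
    ring
  · simp

theorem expM_Zs : expM (Zs d) = revInvPascal d := by
  rw [Zs_eq_reindex_neg_Ys, ← map_expM, expM_smul_Ys]
  ext j i
  simp only [revInvPascal, coe_reindexAlgEquiv, reindex_apply, Fin.revPerm_symm, submatrix_apply,
    Fin.revPerm_apply, of_apply, Fin.val_rev, Nat.add_sub_add_right]
  by_cases h : (j : ℕ) ≤ i
  · rw [show d - j - (d - i) = i - j by omega,
      show (i : ℕ) + j = (i - j) + 2 * j by omega, pow_add, pow_mul]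
    simp
  · rw [Nat.choose_eq_zero_of_lt (by omega)]
    simp

theorem Xs_eq_add :
    Xs d = Zs d + Ys d + diagonal fun i : Fin (d + 1) => (d : ℚ) - 2 * (i : ℕ) := by
  ext j i
  simp only [Xs, Zs, Ys, Matrix.add_apply, diagonal_apply, of_apply, Fin.val_inj]
  split_ifs <;> subst_vars <;> first | omega | ring

theorem Zs_mul_of_apply (f : ℕ → ℕ → ℚ) (j i : Fin (d + 1)) :
    (Zs d * of fun a b : Fin (d + 1) => f a b) j i = ((j : ℚ) - d) * f (j + 1) i := by
  simp only [Zs, mul_apply, of_apply, ite_mul, zero_mul]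
  rw [sum_fin_ite_eq (j + 1) fun t => ((t : ℚ) - d - 1) * f t i]
  split_ifs
  · push_cast; ring
  · simp [show (j : ℕ) = d by omega]

theorem Ys_mul_of_apply (f : ℕ → ℕ → ℚ) (j i : Fin (d + 1)) :
    (Ys d * of fun a b : Fin (d + 1) => f a b) j i = (j : ℚ) * f (j - 1) i := by
  simp only [Ys, mul_apply, of_apply, ite_mul, zero_mul, eq_comm (a := (j : ℕ))]
  rw [sum_fin_ite_add_one_eq j fun t => ((t : ℚ) + 1) * f t i]
  split_ifs with h
  · rw [Nat.cast_pred (by omega)]; ring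
  · simp [show (j : ℕ) = 0 by omega]

theorem of_mul_Zs_apply (f : ℕ → ℕ → ℚ) (j i : Fin (d + 1)) :
    ((of fun a b : Fin (d + 1) => f a b) * Zs d) j i =
      if (i : ℕ) = 0 then 0 else ((i : ℚ) - d - 1) * f j (i - 1) := by
  simp only [Zs, mul_apply, of_apply, mul_ite, mul_zero]
  rw [sum_fin_ite_add_one_eq i fun t => f j t * ((i : ℚ) - d - 1)]
  split_ifs <;> first | omega | ring

theorem Xs_mul_pascal : Xs d * pascal d = pascal d * Zs d := by
  ext j i
  rw [Xs_eq_add, add_mul, add_mul, Matrix.add_apply, Matrix.add_apply, diagonal_mul]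
  simp only [pascal]
  rw [Zs_mul_of_apply d fun a b => (a.choose b : ℚ),
    Ys_mul_of_apply d fun a b => (a.choose b : ℚ),
    of_mul_Zs_apply d fun a b => (a.choose b : ℚ)]
  by_cases h : (i : ℕ) = 0
  · simp only [h, Nat.choose_zero_right, Nat.cast_one, mul_one, of_apply, if_true]
    ring
  · obtain ⟨k, hk⟩ := Nat.exists_eq_add_one_of_ne_zero h
    rw [if_neg h, of_apply, hk, choose_intertwining_identity, Nat.add_sub_cancel]
    push_cast
    ring

theorem P_eq : P d = pascal d * revInvPascal d := by
  rw [P, expM_Ys, expM_mul_eq_mul_expM (Xs_mul_pascal d), expM_Zs]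

theorem pascal_mul_revInvPascal : pascal d * revInvPascal d = revAltPascal d := by
  ext j i
  have hj := j.is_le
  have hi := i.is_le
  simp only [pascal, revInvPascal, revAltPascal, mul_apply, of_apply]
  rw [sum_fin_eq_sum_range_of_le hj
    (fun k => ((j : ℕ).choose k : ℚ) * ((-1) ^ ((i : ℕ) + k) * (d - k).choose (d - i)))
    fun k hk => by simp [Nat.choose_eq_zero_of_lt hk]]
  calc _ = (-1) ^ (i : ℕ) * ∑ k ∈ range (j + 1),
        (-1 : ℚ) ^ k * (j : ℕ).choose k * (d - k).choose (d - i) := by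
        rw [mul_sum]; exact sum_congr rfl fun k _ => by ring
    _ = _ := by
      rw [sum_neg_one_pow_mul_choose_mul_choose_sub _ _ _ hj]
      split_ifs with h
      · rw [Nat.choose_symm_of_eq_add (by omega : d - j = d - i - j + i)]
      · rw [Nat.choose_eq_zero_of_lt (by omega), Nat.cast_zero]

theorem revAltPascal_mul_pascal : revAltPascal d * pascal d = signedAntidiag d := by
  ext j i
  have hj := j.is_le
  simp only [pascal, signedAntidiag, revAltPascal, mul_apply, of_apply]
  rw [sum_fin_eq_sum_range_of_le (Nat.sub_le d j)
    (fun k => (-1) ^ k * ((d - j).choose k : ℚ) * (k.choose i : ℚ))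
    fun k hk => by simp [Nat.choose_eq_zero_of_lt hk]]
  rw [sum_neg_one_pow_mul_choose_mul_choose]
  have hrev : j = i.rev ↔ (i : ℕ) = d - j := by rw [Fin.ext_iff, Fin.val_rev]; omega
  simp only [hrev]
  split_ifs with h
  · rw [h]
  · rfl

theorem pascal_mul_revInvPascal_mul_pascal :
    pascal d * revInvPascal d * pascal d = signedAntidiag d := by
  rw [pascal_mul_revInvPascal, revAltPascal_mul_pascal]

theorem Tx_eq : Tx d = signedAntidiag d := by
  rw [Tx, expM_Ys, expM_Zs, pascal_mul_revInvPascal_mul_pascal]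

theorem signedAntidiag_mul_revInvPascal :
    signedAntidiag d * revInvPascal d = pascal d * signedAntidiag d := by
  ext j i
  have hrev (k : Fin (d + 1)) : j = k.rev ↔ k = j.rev := by rw [eq_comm, Fin.rev_eq_iff]
  simp only [signedAntidiag, revInvPascal, pascal, mul_apply, of_apply, hrev, ite_mul, mul_ite,
    zero_mul, mul_zero, sum_ite_eq', mem_univ, if_true, Fin.val_rev, Nat.add_sub_add_right]
  rw [Nat.sub_sub_self j.is_le, pow_add]
  ring_nf
  simp

theorem signedAntidiag_sq :
    signedAntidiag d ^ 2 = (-1 : ℚ) ^ d • (1 : Matrix (Fin (d + 1)) (Fin (d + 1)) ℚ) := by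
  ext j i
  have hrev (k : Fin (d + 1)) : j = k.rev ↔ k = j.rev := by rw [eq_comm, Fin.rev_eq_iff]
  rw [sq]
  by_cases h : j = i
  · subst h
    simp [signedAntidiag, mul_apply, hrev, ← pow_add, Nat.sub_add_cancel j.is_le]
  · simp [signedAntidiag, mul_apply, hrev, h, Ne.symm h]

theorem signedAntidiag_mulVec_single (i : Fin (d + 1)) :
    signedAntidiag d *ᵥ Pi.single i 1 = (-1 : ℚ) ^ (i : ℕ) • Pi.single i.rev 1 := by
  ext j
  simp [signedAntidiag, Pi.single_apply]

end DualEquitable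

open DualEquitable in
/-- T_x eᵢ = (-1)ⁱ e_{d-i} for 0 ≤ i ≤ d, and P³ = T_x² = (-1)ᵈ I. -/
theorem stmt_19 (d : ℕ) :
    (∀ i : Fin (d + 1), Tx d *ᵥ (Pi.single i (1 : ℚ) : Fin (d + 1) → ℚ) =
      ((-1 : ℚ) ^ (i : ℕ)) • (Pi.single i.rev (1 : ℚ) : Fin (d + 1) → ℚ)) ∧
    P d ^ 3 = ((-1 : ℚ) ^ d) • (1 : Matrix (Fin (d + 1)) (Fin (d + 1)) ℚ) ∧
    Tx d ^ 2 = ((-1 : ℚ) ^ d) • (1 : Matrix (Fin (d + 1)) (Fin (d + 1)) ℚ) := by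
  refine ⟨fun i => ?_, ?_, ?_⟩
  · rw [Tx_eq]
    exact signedAntidiag_mulVec_single d i
  · rw [P_eq, mul_pow_three_eq_sq_of_semiconjBy (pascal_mul_revInvPascal_mul_pascal d)
      (signedAntidiag_mul_revInvPascal d), signedAntidiag_sq]
  · rw [Tx_eq, signedAntidiag_sq]
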